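/- arXiv:2408.09983 — 6 statements merged into one kernel-verified Lean document; each statement's English description precedes it below -/
import Mathlib

section
/- Let n ≥ 4 be even and 2k < n. Let A be the skew-symmetric matrix of the skip-vertex graph Sk(n,k), obtained from the directed n-cycle by adding the edges (1,3), (3,5), ..., (2k−1, 2k+1). Then the vectors v_1 = (0,1,0,1,...,0,1)^T and v_2 with (v_2)_{2i−1} = 1 for all i, (v_2)_{2i} = −1 if i ≤ k and 0 otherwise (with (v_2)_n = 0), both lie in the kernel of A. -/
/-- The skew-symmetric interaction matrix of the skip-vertex graph `Sk(n,k)`: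
the directed `n`-cycle together with the skip edges `(2i−1, 2i+1)` for `i = 1,…,k`
(written here with 0-based indices: cycle edges `(i, i+1 mod n)` and
skip edges `(2l, 2l+2)` for `l < k`). -/
def skA (n k : ℕ) : Matrix (Fin n) (Fin n) ℝ :=
  Matrix.of fun i j =>
    (if (j : ℕ) = ((i : ℕ) + 1) % n then (-1 : ℝ) else 0)
    + (if (i : ℕ) = ((j : ℕ) + 1) % n then 1 else 0)
    + (if (i : ℕ) % 2 = 0 ∧ (i : ℕ) < 2 * k ∧ (j : ℕ) = (i : ℕ) + 2 then -1 else 0)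
    + (if (j : ℕ) % 2 = 0 ∧ (j : ℕ) < 2 * k ∧ (i : ℕ) = (j : ℕ) + 2 then 1 else 0)


lemma key_sum {n : ℕ} (m : ℕ) (c : ℝ) (v : Fin n → ℝ) :
    ∑ j : Fin n, (if (j : ℕ) = m then c else 0) * v j
      = if h : m < n then c * v ⟨m, h⟩ else 0 := by
  split_ifs with h
  · rw [Finset.sum_eq_single (⟨m, h⟩ : Fin n)]
    · simp
    · intro b _ hb
      rw [if_neg, zero_mul]
      exact fun hc => hb (Fin.ext hc)
    · simp
  · apply Finset.sum_eq_zero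
    intro j _
    rw [if_neg, zero_mul]
    intro hc
    exact h (hc ▸ j.isLt)

lemma skA_entry (n k : ℕ) (hn : 4 ≤ n) (hk : 2 * k < n) (v : Fin n → ℝ) (i : Fin n) :
    (skA n k).mulVec v i =
      (-1) * v ⟨((i : ℕ) + 1) % n, Nat.mod_lt _ (by omega)⟩
      + 1 * v ⟨if (i : ℕ) = 0 then n - 1 else (i : ℕ) - 1,
          by have := i.isLt; split_ifs <;> omega⟩
      + (if h : (i : ℕ) % 2 = 0 ∧ (i : ℕ) < 2 * k then
          (-1) * v ⟨(i : ℕ) + 2, by omega⟩ else 0)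
      + (if h : 2 ≤ (i : ℕ) ∧ (i : ℕ) % 2 = 0 ∧ (i : ℕ) < 2 * k + 2 then
          1 * v ⟨(i : ℕ) - 2, by have := i.isLt; omega⟩ else 0) := by
  have hi := i.isLt
  simp only [Matrix.mulVec, skA, Matrix.of_apply, dotProduct, add_mul]
  rw [Finset.sum_add_distrib, Finset.sum_add_distrib, Finset.sum_add_distrib]
  congr 1
  congr 1
  congr 1
  · rw [key_sum, dif_pos (Nat.mod_lt _ (by omega))]
  · have e2 : ∀ j : Fin n,
        (if (i : ℕ) = ((j : ℕ) + 1) % n then (1 : ℝ) else 0)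
        = if (j : ℕ) = (if (i : ℕ) = 0 then n - 1 else (i : ℕ) - 1) then 1 else 0 := by
      intro j
      have hj := j.isLt
      have hmod : ((j : ℕ) + 1) % n = if (j : ℕ) = n - 1 then 0 else (j : ℕ) + 1 := by
        split_ifs with h
        · have : (j : ℕ) + 1 = n := by omega
          rw [this, Nat.mod_self]
        · exact Nat.mod_eq_of_lt (by omega)
      rw [hmod]
      split_ifs <;> first | rfl | (exfalso; omega)
    rw [Finset.sum_congr rfl (fun j _ => by rw [e2]), key_sum,
      dif_pos (by split_ifs <;> omega)]
  · by_cases h3 : (i : ℕ) % 2 = 0 ∧ (i : ℕ) < 2 * k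
    · have e3 : ∀ j : Fin n,
          (if (i : ℕ) % 2 = 0 ∧ (i : ℕ) < 2 * k ∧ (j : ℕ) = (i : ℕ) + 2 then (-1 : ℝ) else 0)
          = if (j : ℕ) = (i : ℕ) + 2 then -1 else 0 := by
        intro j
        simp [h3.1, h3.2]
      rw [Finset.sum_congr rfl (fun j _ => by rw [e3]), key_sum,
        dif_pos (by omega), dif_pos h3]
    · rw [dif_neg h3]
      apply Finset.sum_eq_zero
      intro j _
      rw [if_neg (fun hc => h3 ⟨hc.1, hc.2.1⟩), zero_mul]
  · by_cases h4 : 2 ≤ (i : ℕ) ∧ (i : ℕ) % 2 = 0 ∧ (i : ℕ) < 2 * k + 2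
    · have e4 : ∀ j : Fin n,
          (if (j : ℕ) % 2 = 0 ∧ (j : ℕ) < 2 * k ∧ (i : ℕ) = (j : ℕ) + 2 then (1 : ℝ) else 0)
          = if (j : ℕ) = (i : ℕ) - 2 then 1 else 0 := by
        intro j
        have : ((j : ℕ) % 2 = 0 ∧ (j : ℕ) < 2 * k ∧ (i : ℕ) = (j : ℕ) + 2)
            ↔ (j : ℕ) = (i : ℕ) - 2 := by omega
        rw [if_congr this rfl rfl]
      rw [Finset.sum_congr rfl (fun j _ => by rw [e4]), key_sum,
        dif_pos (by omega), dif_pos h4]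
    · rw [dif_neg h4]
      apply Finset.sum_eq_zero
      intro j _
      rw [if_neg (by omega), zero_mul]

set_option maxHeartbeats 2000000 in
theorem stmt_9 (n k : ℕ) (hn : 4 ≤ n) (hev : Even n) (hk : 2 * k < n)
    (v1 v2 : Fin n → ℝ)
    (hv1 : ∀ i, v1 i = if (i : ℕ) % 2 = 1 then 1 else 0)
    (hv2 : ∀ i, v2 i = if (i : ℕ) % 2 = 0 then 1
      else if (i : ℕ) < 2 * k then -1 else 0) :
    (skA n k).mulVec v1 = 0 ∧ (skA n k).mulVec v2 = 0 := by
  have hn2 : n % 2 = 0 := Nat.even_iff.mp hev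
  constructor
  · funext i
    have hi := i.isLt
    have hm1 : ((i : ℕ) + 1) % n = if (i : ℕ) + 1 = n then 0 else (i : ℕ) + 1 := by
      split_ifs with h
      · rw [h, Nat.mod_self]
      · exact Nat.mod_eq_of_lt (by omega)
    rw [skA_entry n k hn hk]
    simp only [hv1, hm1, Fin.val_mk, Pi.zero_apply]
    split_ifs <;> first | (exfalso; first | contradiction | omega) | norm_num
  · funext i
    have hi := i.isLt
    have hm1 : ((i : ℕ) + 1) % n = if (i : ℕ) + 1 = n then 0 else (i : ℕ) + 1 := by
      split_ifs with h
      · rw [h, Nat.mod_self]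
      · exact Nat.mod_eq_of_lt (by omega)
    rw [skA_entry n k hn hk]
    simp only [hv2, hm1, Fin.val_mk, Pi.zero_apply]
    split_ifs <;> first | (exfalso; first | contradiction | omega) | norm_num
end

section
/- Let n ≥ 4 be even and 2k < n. The replicator dynamics generated by the skip-vertex graph Sk(n,k) have a fixed point in the interior of the simplex Δ_{n−1}. Specifically, for any α with 1/(n−k) < α < 2/n and β = (nα − 2)/(2k − n), the vector v = α v_1 + β v_2 (with v_1, v_2 the kernel vectors of the skip-graph matrix) has strictly positive entries summing to 1 and satisfies A v = 0. -/
open Finset Matrix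

lemma Nat.add_one_mod_eq_ite {i n : ℕ} (hi : i < n) :
    (i + 1) % n = if i + 1 = n then 0 else i + 1 := by
  split_ifs with h
  · rw [h, Nat.mod_self]
  · exact Nat.mod_eq_of_lt (by omega)

lemma sum_ite_mul_eq_of_iff {n : ℕ} {P : Fin n → Prop} [DecidablePred P] {Q : Prop} [Decidable Q]
    {p : ℕ} (hp : Q → p < n) (hP : ∀ j : Fin n, P j ↔ Q ∧ (j : ℕ) = p) (c : ℝ) (f : ℕ → ℝ) :
    ∑ j : Fin n, (if P j then c else 0) * f j = if Q then c * f p else 0 := by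
  split_ifs with hQ
  · rw [Finset.sum_eq_single ⟨p, hp hQ⟩]
    · simp [hP, hQ]
    · intro j _ hj
      rw [if_neg fun h => hj (Fin.ext ((hP j).1 h).2), zero_mul]
    · simp
  · exact Finset.sum_eq_zero fun j _ => by rw [if_neg fun h => hQ ((hP j).1 h).1, zero_mul]

theorem skA_mulVec_apply {n k : ℕ} (hk : 2 * k < n) (f : ℕ → ℝ) (i : Fin n) :
    (skA n k *ᵥ fun j => f j) i =
      f (if (i : ℕ) = 0 then n - 1 else i - 1) - f (if (i : ℕ) + 1 = n then 0 else i + 1)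
      - (if (i : ℕ) % 2 = 0 ∧ (i : ℕ) < 2 * k then f (i + 2) else 0)
      + (if (i : ℕ) % 2 = 0 ∧ 2 ≤ (i : ℕ) ∧ (i : ℕ) ≤ 2 * k then f (i - 2) else 0) := by
  have hi := i.isLt
  simp only [mulVec, dotProduct, skA, of_apply, add_mul, sum_add_distrib]
  rw [sum_ite_mul_eq_of_iff (Q := True) (p := if (i : ℕ) + 1 = n then 0 else i + 1) (by grind)
      (fun j => by rw [Nat.add_one_mod_eq_ite hi]; simp),
    sum_ite_mul_eq_of_iff (Q := True) (p := if (i : ℕ) = 0 then n - 1 else i - 1) (by grind)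
      (fun j => by rw [Nat.add_one_mod_eq_ite j.isLt]; grind),
    sum_ite_mul_eq_of_iff (Q := (i : ℕ) % 2 = 0 ∧ (i : ℕ) < 2 * k) (p := i + 2) (by omega)
      (fun j => by grind),
    sum_ite_mul_eq_of_iff (Q := (i : ℕ) % 2 = 0 ∧ 2 ≤ (i : ℕ) ∧ (i : ℕ) ≤ 2 * k) (p := i - 2)
      (by omega) (fun j => by omega)]
  split_ifs <;> simp <;> ring

/-- The paper's kernel vectors `v₁`, `v₂` as functions of the 0-based index, so the paper's
position `2i` is the odd index `2i - 1` here. -/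
def skV₁ (p : ℕ) : ℝ := if p % 2 = 1 then 1 else 0

def skV₂ (k p : ℕ) : ℝ := if p % 2 = 0 then 1 else if p < 2 * k then -1 else 0

lemma skV₁_congr_mod_two {p q : ℕ} (h : p % 2 = q % 2) : skV₁ p = skV₁ q := by
  simp only [skV₁, h]

theorem skA_mulVec_skV₁ {n k : ℕ} (hev : Even n) (hk : 2 * k < n) :
    skA n k *ᵥ (fun i => skV₁ i) = 0 := by
  funext i
  have hn := Nat.even_iff.mp hev
  have hi := i.isLt
  have hprev : skV₁ (if (i : ℕ) = 0 then n - 1 else i - 1) = skV₁ (i + 1) :=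
    skV₁_congr_mod_two (by split_ifs <;> omega)
  have hnext : skV₁ (if (i : ℕ) + 1 = n then 0 else i + 1) = skV₁ (i + 1) :=
    skV₁_congr_mod_two (by split_ifs <;> omega)
  rw [skA_mulVec_apply hk, hprev, hnext]
  unfold skV₁
  split_ifs <;> first | omega | norm_num

lemma skV₂_of_mod_two_eq_zero (k : ℕ) {p : ℕ} (h : p % 2 = 0) : skV₂ k p = 1 := if_pos h

lemma skV₂_of_mod_two_eq_one (k : ℕ) {p : ℕ} (h : p % 2 = 1) :
    skV₂ k p = if p < 2 * k then -1 else 0 := if_neg (by omega)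

theorem skA_mulVec_skV₂ {n k : ℕ} (hev : Even n) (hk : 2 * k < n) :
    skA n k *ᵥ (fun i => skV₂ k i) = 0 := by
  funext i
  have hn := Nat.even_iff.mp hev
  have hi := i.isLt
  rw [skA_mulVec_apply hk]
  rcases Nat.mod_two_eq_zero_or_one i with heven | hodd
  · rw [if_neg (show (i : ℕ) + 1 ≠ n by omega),
      skV₂_of_mod_two_eq_one k (p := if (i : ℕ) = 0 then n - 1 else i - 1) (by split_ifs <;> omega),
      skV₂_of_mod_two_eq_one k (p := i + 1) (by omega),
      skV₂_of_mod_two_eq_zero k (p := i + 2) (by omega),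
      skV₂_of_mod_two_eq_zero k (p := i - 2) (by omega)]
    split_ifs <;> first | omega | norm_num
  · rw [skV₂_of_mod_two_eq_zero k (p := if (i : ℕ) = 0 then n - 1 else i - 1) (by split_ifs <;> omega),
      skV₂_of_mod_two_eq_zero k (p := if (i : ℕ) + 1 = n then 0 else i + 1) (by split_ifs <;> omega),
      if_neg (by omega), if_neg (by omega)]
    norm_num

lemma Finset.sum_range_two_mul {M : Type*} [AddCommMonoid M] (g : ℕ → M) (m : ℕ) :
    ∑ p ∈ range (2 * m), g p = ∑ q ∈ range m, (g (2 * q) + g (2 * q + 1)) := by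
  induction m with
  | zero => simp
  | succ m ih => rw [Nat.mul_succ, sum_range_succ, sum_range_succ, ih, sum_range_succ, add_assoc]

theorem sum_skV₁ {n : ℕ} (hev : Even n) : ∑ i : Fin n, skV₁ i = n / 2 := by
  obtain ⟨m, rfl⟩ := hev
  rw [Fin.sum_univ_eq_sum_range (fun p => skV₁ p), ← two_mul, sum_range_two_mul]
  simp [skV₁]

theorem sum_skV₂ {n k : ℕ} (hev : Even n) (hk : 2 * k ≤ n) :
    ∑ i : Fin n, skV₂ k i = n / 2 - k := by
  obtain ⟨m, rfl⟩ := hev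
  rw [Fin.sum_univ_eq_sum_range (fun p => skV₂ k p), ← two_mul, sum_range_two_mul,
    ← sum_range_add_sum_Ico _ (show k ≤ m by omega)]
  have hlow : ∀ q ∈ range k, skV₂ k (2 * q) + skV₂ k (2 * q + 1) = 0 := by
    intro q hq
    simp only [mem_range] at hq
    simp [skV₂, show 2 * q + 1 < 2 * k by omega]
  have hhigh : ∀ q ∈ Ico k m, skV₂ k (2 * q) + skV₂ k (2 * q + 1) = 1 := by
    intro q hq
    simp only [mem_Ico] at hq
    simp [skV₂, show ¬ 2 * q + 1 < 2 * k by omega]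
  rw [sum_congr rfl hlow, sum_congr rfl hhigh]
  simp [Nat.cast_sub (show k ≤ m by omega)]

lemma skip_weight_pos_and_lt {n k α : ℝ} (hk0 : 0 ≤ k) (hk : 2 * k < n)
    (hα₁ : 1 / (n - k) < α) (hα₂ : α < 2 / n) :
    0 < (n * α - 2) / (2 * k - n) ∧ (n * α - 2) / (2 * k - n) < α := by
  have hnk : 0 < n - k := by linarith
  have h₁ : 1 < α * (n - k) := (div_lt_iff₀ hnk).mp hα₁
  have h₂ : α * n < 2 := (lt_div_iff₀ (by linarith)).mp hα₂
  refine ⟨div_pos_of_neg_of_neg (by linarith) (by linarith), ?_⟩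
  rw [div_lt_iff_of_neg (by linarith)]
  linarith

theorem stmt_10_general (n k : ℕ) (hev : Even n) (hk : 2 * k < n)
    (v1 v2 : Fin n → ℝ)
    (hv1 : ∀ i, v1 i = if (i : ℕ) % 2 = 1 then 1 else 0)
    (hv2 : ∀ i, v2 i = if (i : ℕ) % 2 = 0 then 1
      else if (i : ℕ) < 2 * k then -1 else 0)
    (α : ℝ) (hα1 : 1 / ((n : ℝ) - (k : ℝ)) < α) (hα2 : α < 2 / (n : ℝ))
    (β : ℝ) (hβ : β = ((n : ℝ) * α - 2) / (2 * (k : ℝ) - (n : ℝ)))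
    (v : Fin n → ℝ) (hv : ∀ i, v i = α * v1 i + β * v2 i) :
    (∀ i, 0 < v i) ∧ (∑ i, v i) = 1 ∧ (skA n k).mulVec v = 0 := by
  have hkR : 2 * (k : ℝ) < n := by exact_mod_cast hk
  obtain ⟨hβ0, hβα⟩ := skip_weight_pos_and_lt (Nat.cast_nonneg k) hkR hα1 hα2
  rw [← hβ] at hβ0 hβα
  have hv1_eq : v1 = fun i : Fin n => skV₁ i := funext hv1
  have hv2_eq : v2 = fun i : Fin n => skV₂ k i := funext hv2
  have hv_eq : v = α • v1 + β • v2 := funext hv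
  refine ⟨fun i => ?_, ?_, ?_⟩
  · rw [hv, hv1, hv2]
    split_ifs <;> first | omega | linarith
  · rw [hv_eq, hv1_eq, hv2_eq]
    simp only [Pi.add_apply, Pi.smul_apply, smul_eq_mul, sum_add_distrib, ← mul_sum,
      sum_skV₁ hev, sum_skV₂ hev hk.le, hβ]
    field_simp [(show 2 * (k : ℝ) - n < 0 by linarith).ne]
    ring
  · rw [hv_eq, hv1_eq, hv2_eq, mulVec_add, mulVec_smul, mulVec_smul, skA_mulVec_skV₁ hev hk,
      skA_mulVec_skV₂ hev hk, smul_zero, smul_zero, add_zero]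

theorem stmt_10 (n k : ℕ) (hn : 4 ≤ n) (hev : Even n) (hk : 2 * k < n)
    (v1 v2 : Fin n → ℝ)
    (hv1 : ∀ i, v1 i = if (i : ℕ) % 2 = 1 then 1 else 0)
    (hv2 : ∀ i, v2 i = if (i : ℕ) % 2 = 0 then 1
      else if (i : ℕ) < 2 * k then -1 else 0)
    (α : ℝ) (hα1 : 1 / ((n : ℝ) - (k : ℝ)) < α) (hα2 : α < 2 / (n : ℝ))
    (β : ℝ) (hβ : β = ((n : ℝ) * α - 2) / (2 * (k : ℝ) - (n : ℝ)))
    (v : Fin n → ℝ) (hv : ∀ i, v i = α * v1 i + β * v2 i) :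
    (∀ i, 0 < v i) ∧ (∑ i, v i) = 1 ∧ (skA n k).mulVec v = 0 :=
  stmt_10_general n k hev hk v1 v2 hv1 hv2 α hα1 hα2 β hβ v hv
end

section
/- Let n be odd and let A be the skew-symmetric matrix of the skip-vertex graph Sk(n,k) with 2k < n. Then the kernel of A is one-dimensional, spanned by the vector v with v_i = 1 at unskipped vertices and v_i = 0 at skipped vertices; in particular, since v has zero entries, the replicator dynamics generated by Sk(n,k) have no fixed point in the interior of Δ_{n−1}. -/
private lemma mymod {n a b : ℕ} (hb : b < n) (h : a = b ∨ a = b + n) : a % n = b := by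
  rcases h with rfl | rfl
  · exact Nat.mod_eq_of_lt hb
  · rw [Nat.add_mod_right]; exact Nat.mod_eq_of_lt hb

private lemma sum_ite_unique {n : ℕ} (p : Fin n → Prop) [DecidablePred p] (c : ℝ)
    (y : Fin n → ℝ) (e : Fin n) (he : ∀ j, p j ↔ j = e) :
    ∑ j, (if p j then c else 0) * y j = c * y e := by
  have h : ∀ j ∈ Finset.univ, (if p j then c else 0) * y j
      = if j = e then c * y j else (0:ℝ) := by
    intro j _
    rw [if_congr (he j) rfl rfl, ite_mul, zero_mul]
  rw [Finset.sum_congr rfl h, Finset.sum_ite_eq' Finset.univ e fun j => c * y j]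
  simp

private lemma sum_ite_none {n : ℕ} (p : Fin n → Prop) [DecidablePred p] (c : ℝ)
    (y : Fin n → ℝ) (he : ∀ j, ¬ p j) :
    ∑ j, (if p j then c else 0) * y j = 0 :=
  Finset.sum_eq_zero fun j _ => by rw [if_neg (he j), zero_mul]

private lemma skA_mulVec_eq (n k : ℕ) (hn0 : 0 < n) (hk : 2 * k < n)
    (y : Fin n → ℝ) (i : Fin n) :
    (skA n k).mulVec y i =
      -(y ⟨((i:ℕ)+1) % n, Nat.mod_lt _ hn0⟩) + y ⟨((i:ℕ)+(n-1)) % n, Nat.mod_lt _ hn0⟩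
      + (if (i:ℕ) % 2 = 0 ∧ (i:ℕ) < 2*k then -(y ⟨((i:ℕ)+2) % n, Nat.mod_lt _ hn0⟩) else 0)
      + (if (i:ℕ) % 2 = 0 ∧ 2 ≤ (i:ℕ) ∧ (i:ℕ) ≤ 2*k then y ⟨((i:ℕ)-2) % n, Nat.mod_lt _ hn0⟩ else 0) := by
  have hi := i.isLt
  have hsplit : ∀ j : Fin n, skA n k i j * y j =
      (if (j : ℕ) = ((i : ℕ) + 1) % n then (-1 : ℝ) else 0) * y j
      + (if (i : ℕ) = ((j : ℕ) + 1) % n then (1:ℝ) else 0) * y j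
      + (if (i : ℕ) % 2 = 0 ∧ (i : ℕ) < 2 * k ∧ (j : ℕ) = (i : ℕ) + 2 then (-1:ℝ) else 0) * y j
      + (if (j : ℕ) % 2 = 0 ∧ (j : ℕ) < 2 * k ∧ (i : ℕ) = (j : ℕ) + 2 then (1:ℝ) else 0) * y j := by
    intro j; simp only [skA, Matrix.of_apply]; ring
  show ∑ j, skA n k i j * y j = _
  rw [Finset.sum_congr rfl (fun j _ => hsplit j), Finset.sum_add_distrib,
    Finset.sum_add_distrib, Finset.sum_add_distrib]
  have h1 : ∑ j : Fin n, (if (j : ℕ) = ((i : ℕ) + 1) % n then (-1 : ℝ) else 0) * y j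
      = (-1) * y ⟨((i:ℕ)+1) % n, Nat.mod_lt _ hn0⟩ := by
    refine sum_ite_unique _ _ _ _ (fun j => ?_)
    rw [Fin.ext_iff]
  have h2 : ∑ j : Fin n, (if (i : ℕ) = ((j : ℕ) + 1) % n then (1:ℝ) else 0) * y j
      = 1 * y ⟨((i:ℕ)+(n-1)) % n, Nat.mod_lt _ hn0⟩ := by
    refine sum_ite_unique _ _ _ _ (fun j => ?_)
    rw [Fin.ext_iff]
    constructor
    · intro h
      show (j:ℕ) = ((i:ℕ)+(n-1)) % n
      have h' : ((i:ℕ)+(n-1)) % n = (((j:ℕ)+1) % n + (n-1)) % n := by rw [← h]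
      rw [h', Nat.mod_add_mod]
      exact (mymod j.isLt (by omega)).symm
    · intro h
      have hj : (j:ℕ) = ((i:ℕ)+(n-1)) % n := h
      rw [hj, Nat.mod_add_mod]
      exact (mymod hi (by omega)).symm
  have h3 : ∑ j : Fin n, (if (i : ℕ) % 2 = 0 ∧ (i : ℕ) < 2 * k ∧ (j : ℕ) = (i : ℕ) + 2 then (-1:ℝ) else 0) * y j
      = if (i:ℕ) % 2 = 0 ∧ (i:ℕ) < 2*k then -(y ⟨((i:ℕ)+2) % n, Nat.mod_lt _ hn0⟩) else 0 := by
    by_cases hc : (i:ℕ) % 2 = 0 ∧ (i:ℕ) < 2*k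
    · rw [if_pos hc]
      have hlt : (i:ℕ) + 2 < n := by omega
      have hm : ((i:ℕ)+2) % n = (i:ℕ)+2 := Nat.mod_eq_of_lt hlt
      have h' : ∑ j : Fin n, (if (i : ℕ) % 2 = 0 ∧ (i : ℕ) < 2 * k ∧ (j : ℕ) = (i : ℕ) + 2 then (-1:ℝ) else 0) * y j
          = (-1) * y ⟨((i:ℕ)+2) % n, Nat.mod_lt _ hn0⟩ := by
        refine sum_ite_unique _ _ _ _ (fun j => ?_)
        rw [Fin.ext_iff]
        simp only [hm]
        constructor
        · rintro ⟨-, -, h⟩; exact h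
        · intro h; exact ⟨hc.1, hc.2, h⟩
      rw [h']; ring
    · rw [if_neg hc]
      exact sum_ite_none _ _ _ (fun j hj => hc ⟨hj.1, hj.2.1⟩)
  have h4 : ∑ j : Fin n, (if (j : ℕ) % 2 = 0 ∧ (j : ℕ) < 2 * k ∧ (i : ℕ) = (j : ℕ) + 2 then (1:ℝ) else 0) * y j
      = if (i:ℕ) % 2 = 0 ∧ 2 ≤ (i:ℕ) ∧ (i:ℕ) ≤ 2*k then y ⟨((i:ℕ)-2) % n, Nat.mod_lt _ hn0⟩ else 0 := by
    by_cases hc : (i:ℕ) % 2 = 0 ∧ 2 ≤ (i:ℕ) ∧ (i:ℕ) ≤ 2*k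
    · rw [if_pos hc]
      have hm : ((i:ℕ)-2) % n = (i:ℕ)-2 := Nat.mod_eq_of_lt (by omega)
      have h' : ∑ j : Fin n, (if (j : ℕ) % 2 = 0 ∧ (j : ℕ) < 2 * k ∧ (i : ℕ) = (j : ℕ) + 2 then (1:ℝ) else 0) * y j
          = 1 * y ⟨((i:ℕ)-2) % n, Nat.mod_lt _ hn0⟩ := by
        refine sum_ite_unique _ _ _ _ (fun j => ?_)
        rw [Fin.ext_iff]
        simp only [hm]
        constructor
        · rintro ⟨-, -, h⟩; omega
        · intro hj
          have h'' : (j:ℕ) = (i:ℕ) - 2 := hj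
          refine ⟨by omega, by omega, by omega⟩
      rw [h']; ring
    · rw [if_neg hc]
      refine sum_ite_none _ _ _ (fun j hj => hc ?_)
      obtain ⟨h1', h2', h3'⟩ := hj
      exact ⟨by omega, by omega, by omega⟩
  rw [h1, h2, h3, h4]; ring

private def Zf (n : ℕ) (hn0 : 0 < n) (y : Fin n → ℝ) (m : ℕ) : ℝ :=
  y ⟨m % n, Nat.mod_lt m hn0⟩

private lemma Zf_congr {n : ℕ} (hn0 : 0 < n) (y : Fin n → ℝ) {a b : ℕ}
    (h : a % n = b % n) : Zf n hn0 y a = Zf n hn0 y b := by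
  unfold Zf
  congr 1
  exact Fin.mk_eq_mk.mpr h

private lemma Zf_eq {n : ℕ} (hn0 : 0 < n) (y : Fin n → ℝ) {a : ℕ} (ha : a < n) :
    Zf n hn0 y a = y ⟨a, ha⟩ := by
  unfold Zf
  congr 1
  exact Fin.mk_eq_mk.mpr (Nat.mod_eq_of_lt ha)

private lemma skA_eq (n k : ℕ) (hn0 : 0 < n) (hk : 2 * k < n) (y : Fin n → ℝ)
    (hy : (skA n k).mulVec y = 0) (a : ℕ) (ha : a < n) :
    -(Zf n hn0 y (a+1)) + Zf n hn0 y (a+(n-1))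
    + (if a % 2 = 0 ∧ a < 2*k then -(Zf n hn0 y (a+2)) else 0)
    + (if a % 2 = 0 ∧ 2 ≤ a ∧ a ≤ 2*k then Zf n hn0 y (a-2) else 0) = 0 := by
  have h0 : (skA n k).mulVec y ⟨a, ha⟩ = 0 := congrFun hy _
  rw [skA_mulVec_eq n k hn0 hk y ⟨a, ha⟩] at h0
  exact h0

private lemma ker_sub (n k : ℕ) (hn0 : 0 < n) (hn : 4 ≤ n) (hnodd : n % 2 = 1)
    (hk : 2 * k < n) (hk1 : 1 ≤ k) (y : Fin n → ℝ)
    (hy : (skA n k).mulVec y = 0) (i : Fin n) :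
    y i = Zf n hn0 y 0 * (if (i:ℕ) % 2 = 1 ∧ (i:ℕ) < 2*k then 0 else 1) := by
  have E := skA_eq n k hn0 hk y hy
  -- all even entries are equal to Z 0
  have ceven : ∀ m, 2*m < n → Zf n hn0 y (2*m) = Zf n hn0 y 0 := by
    intro m
    induction m with
    | zero => intro _; rfl
    | succ m ih =>
      intro hm
      have e := E (2*m+1) (by omega)
      rw [if_neg (by omega), if_neg (by omega)] at e
      have hmm : Zf n hn0 y (2*m+1+(n-1)) = Zf n hn0 y (2*m) :=
        Zf_congr hn0 y (by rw [mymod (b := 2*m) (by omega) (by omega), Nat.mod_eq_of_lt (by omega : 2*m < n)])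
      have ih' := ih (by omega)
      have h21 : 2*(m+1) = 2*m+1+1 := by omega
      rw [h21]
      linarith [e, hmm, ih']
  -- odd entries above 2k are equal to Z 0
  have key : ∀ d j, n ≤ j + d → j < n → j % 2 = 1 → 2*k < j → Zf n hn0 y j = Zf n hn0 y 0 := by
    intro d
    induction d with
    | zero => intro j h1 h2 _ _; omega
    | succ d ih =>
      intro j hjd hjn hj2 hjk
      have e := E (j+1) (by omega)
      rw [if_neg (by omega), if_neg (by omega)] at e
      have h1 : Zf n hn0 y (j+1+(n-1)) = Zf n hn0 y j :=
        Zf_congr hn0 y (by rw [mymod (b := j) (by omega) (by omega), Nat.mod_eq_of_lt hjn])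
      by_cases hc : j + 2 = n
      · have h2 : Zf n hn0 y (j+1+1) = Zf n hn0 y 0 :=
          Zf_congr hn0 y (by rw [mymod (b := 0) (by omega) (by omega), Nat.zero_mod])
        linarith [e, h1, h2]
      · have h3 : Zf n hn0 y (j+1+1) = Zf n hn0 y 0 := by
          have := ih (j+2) (by omega) (by omega) (by omega) (by omega)
          rw [show j+1+1 = j+2 by omega]
          exact this
        linarith [e, h1, h3]
  have callbig : ∀ j, j < n → (j % 2 = 0 ∨ 2*k < j) → Zf n hn0 y j = Zf n hn0 y 0 := by
    intro j hj hc
    by_cases hj2 : j % 2 = 0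
    · rw [show j = 2*(j/2) by omega]
      exact ceven _ (by omega)
    · exact key n j (by omega) hj (by omega) (by omega)
  -- first odd entry is 0
  have c1 : Zf n hn0 y 1 = 0 := by
    have e := E 0 hn0
    rw [if_pos ⟨by omega, by omega⟩, if_neg (by omega)] at e
    simp only [Nat.zero_add] at e
    have h1 : Zf n hn0 y (n-1) = Zf n hn0 y 0 := callbig _ (by omega) (by omega)
    have h2 : Zf n hn0 y 2 = Zf n hn0 y 0 := callbig _ (by omega) (by omega)
    linarith [e, h1, h2]
  -- odd entries below 2k are 0
  have clow : ∀ m, 2*m+1 < 2*k → Zf n hn0 y (2*m+1) = 0 := by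
    intro m
    induction m with
    | zero => intro _; exact c1
    | succ m ih =>
      intro hm
      have e := E (2*m+2) (by omega)
      rw [if_pos ⟨by omega, by omega⟩, if_pos ⟨by omega, by omega, by omega⟩] at e
      have h1 : Zf n hn0 y (2*m+2+(n-1)) = Zf n hn0 y (2*m+1) :=
        Zf_congr hn0 y (by rw [mymod (b := 2*m+1) (by omega) (by omega), Nat.mod_eq_of_lt (by omega : 2*m+1 < n)])
      have h2 : Zf n hn0 y (2*m+2+2) = Zf n hn0 y 0 := by
        rw [show 2*m+2+2 = 2*(m+2) by omega]
        exact ceven _ (by omega)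
      have h3 : Zf n hn0 y (2*m+2-2) = Zf n hn0 y 0 := by
        rw [show 2*m+2-2 = 2*m by omega]
        exact ceven _ (by omega)
      have ih' := ih (by omega)
      have hg : 2*(m+1)+1 = 2*m+2+1 := by omega
      rw [hg]
      linarith [e, h1, h2, h3, ih']
  -- conclude
  have hyi : y i = Zf n hn0 y (i:ℕ) := (Zf_eq hn0 y i.isLt).symm.trans (by congr 1)
  rw [hyi]
  by_cases hc : (i:ℕ) % 2 = 1 ∧ (i:ℕ) < 2*k
  · rw [if_pos hc, mul_zero]
    rw [show (i:ℕ) = 2*((i:ℕ)/2)+1 by omega]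
    exact clow _ (by omega)
  · rw [if_neg hc, mul_one]
    exact callbig _ i.isLt (by omega)

private lemma v_ker (n k : ℕ) (hn0 : 0 < n) (hn : 4 ≤ n) (hnodd : n % 2 = 1)
    (hk : 2 * k < n) (hk1 : 1 ≤ k) (v : Fin n → ℝ)
    (hv : ∀ i, v i = if (i : ℕ) % 2 = 1 ∧ (i : ℕ) < 2 * k then 0 else 1) :
    (skA n k).mulVec v = 0 := by
  funext i
  rw [skA_mulVec_eq n k hn0 hk v i]
  have hV : ∀ (p : ℕ) (hp : p < n), v ⟨p, hp⟩ = if p % 2 = 1 ∧ p < 2*k then (0:ℝ) else 1 :=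
    fun p hp => hv ⟨p, hp⟩
  simp only [hV, Pi.zero_apply]
  set a := (i : ℕ) with hA
  have ha : a < n := i.isLt
  by_cases h2 : a % 2 = 1
  · rw [if_neg (show ¬(a % 2 = 0 ∧ a < 2*k) by omega),
        if_neg (show ¬(a % 2 = 0 ∧ 2 ≤ a ∧ a ≤ 2*k) by omega),
        mymod (n := n) (a := a+1) (b := a+1) (by omega) (by omega),
        mymod (n := n) (a := a+(n-1)) (b := a-1) (by omega) (by omega),
        if_neg (show ¬((a+1) % 2 = 1 ∧ a+1 < 2*k) by omega),
        if_neg (show ¬((a-1) % 2 = 1 ∧ a-1 < 2*k) by omega)]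
    norm_num
  · by_cases h0 : a = 0
    · rw [if_pos (show a % 2 = 0 ∧ a < 2*k by omega),
          if_neg (show ¬(a % 2 = 0 ∧ 2 ≤ a ∧ a ≤ 2*k) by omega),
          mymod (n := n) (a := a+1) (b := 1) (by omega) (by omega),
          mymod (n := n) (a := a+(n-1)) (b := n-1) (by omega) (by omega),
          mymod (n := n) (a := a+2) (b := 2) (by omega) (by omega),
          if_pos (show (1:ℕ) % 2 = 1 ∧ 1 < 2*k by omega),
          if_neg (show ¬((n-1) % 2 = 1 ∧ n-1 < 2*k) by omega),
          if_neg (show ¬((2:ℕ) % 2 = 1 ∧ 2 < 2*k) by omega)]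
      norm_num
    · by_cases hlt : a < 2*k
      · rw [if_pos (show a % 2 = 0 ∧ a < 2*k by omega),
            if_pos (show a % 2 = 0 ∧ 2 ≤ a ∧ a ≤ 2*k by omega),
            mymod (n := n) (a := a+1) (b := a+1) (by omega) (by omega),
            mymod (n := n) (a := a+(n-1)) (b := a-1) (by omega) (by omega),
            mymod (n := n) (a := a+2) (b := a+2) (by omega) (by omega),
            mymod (n := n) (a := a-2) (b := a-2) (by omega) (by omega),
            if_pos (show (a+1) % 2 = 1 ∧ a+1 < 2*k by omega),
            if_pos (show (a-1) % 2 = 1 ∧ a-1 < 2*k by omega),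
            if_neg (show ¬((a+2) % 2 = 1 ∧ a+2 < 2*k) by omega),
            if_neg (show ¬((a-2) % 2 = 1 ∧ a-2 < 2*k) by omega)]
        norm_num
      · by_cases heq : a = 2*k
        · rw [if_neg (show ¬(a % 2 = 0 ∧ a < 2*k) by omega),
              if_pos (show a % 2 = 0 ∧ 2 ≤ a ∧ a ≤ 2*k by omega),
              mymod (n := n) (a := a+(n-1)) (b := a-1) (by omega) (by omega),
              mymod (n := n) (a := a-2) (b := a-2) (by omega) (by omega),
              if_pos (show (a-1) % 2 = 1 ∧ a-1 < 2*k by omega),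
              if_neg (show ¬((a-2) % 2 = 1 ∧ a-2 < 2*k) by omega)]
          by_cases htop : a + 1 = n
          · rw [mymod (n := n) (a := a+1) (b := 0) (by omega) (by omega),
                if_neg (show ¬((0:ℕ) % 2 = 1 ∧ 0 < 2*k) by omega)]
            norm_num
          · rw [mymod (n := n) (a := a+1) (b := a+1) (by omega) (by omega),
                if_neg (show ¬((a+1) % 2 = 1 ∧ a+1 < 2*k) by omega)]
            norm_num
        · -- a even, a > 2k
          rw [if_neg (show ¬(a % 2 = 0 ∧ a < 2*k) by omega),
              if_neg (show ¬(a % 2 = 0 ∧ 2 ≤ a ∧ a ≤ 2*k) by omega),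
              mymod (n := n) (a := a+(n-1)) (b := a-1) (by omega) (by omega),
              if_neg (show ¬((a-1) % 2 = 1 ∧ a-1 < 2*k) by omega)]
          by_cases htop : a + 1 = n
          · rw [mymod (n := n) (a := a+1) (b := 0) (by omega) (by omega),
                if_neg (show ¬((0:ℕ) % 2 = 1 ∧ 0 < 2*k) by omega)]
            norm_num
          · rw [mymod (n := n) (a := a+1) (b := a+1) (by omega) (by omega),
                if_neg (show ¬((a+1) % 2 = 1 ∧ a+1 < 2*k) by omega)]
            norm_num

theorem stmt_11 (n k : ℕ) (hn : 4 ≤ n) (hodd : Odd n) (hk : 2 * k < n) (hk1 : 1 ≤ k)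
    -- `v` is `0` at skipped vertices (0-based: odd indices below `2k`) and `1` elsewhere
    (v : Fin n → ℝ)
    (hv : ∀ i, v i = if (i : ℕ) % 2 = 1 ∧ (i : ℕ) < 2 * k then 0 else 1) :
    LinearMap.ker (Matrix.mulVecLin (skA n k)) = Submodule.span ℝ {v} ∧
    ¬ ∃ y : Fin n → ℝ, (∀ i, 0 < y i) ∧ (∑ i, y i) = 1 ∧ (skA n k).mulVec y = 0 := by
  have hn0 : 0 < n := by omega
  have hnodd : n % 2 = 1 := Nat.odd_iff.mp hodd
  constructor
  · apply le_antisymm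
    · intro y hy
      have hy' : (skA n k).mulVec y = 0 := by
        rwa [LinearMap.mem_ker, Matrix.mulVecLin_apply] at hy
      have hyv : y = Zf n hn0 y 0 • v := by
        funext j
        rw [Pi.smul_apply, smul_eq_mul, hv j]
        exact ker_sub n k hn0 hn hnodd hk hk1 y hy' j
      exact Submodule.mem_span_singleton.mpr ⟨_, hyv.symm⟩
    · rw [Submodule.span_le, Set.singleton_subset_iff, SetLike.mem_coe,
        LinearMap.mem_ker, Matrix.mulVecLin_apply]
      exact v_ker n k hn0 hn hnodd hk hk1 v hv
  · rintro ⟨y, hpos, -, hy0⟩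
    have h1n : 1 < n := by omega
    have h6 := ker_sub n k hn0 hn hnodd hk hk1 y hy0 ⟨1, h1n⟩
    have hval : ((⟨1, h1n⟩ : Fin n) : ℕ) = 1 := rfl
    rw [hval, if_pos (show (1:ℕ) % 2 = 1 ∧ 1 < 2*k by omega), mul_zero] at h6
    have := hpos ⟨1, h1n⟩
    rw [h6] at this
    exact lt_irrefl _ this
end

section
/- Let n ≥ 2 and let à be the (2n−2)×(2n−2) skew-symmetric banded matrix obtained from the skip-graph interaction matrix by deleting the last two rows and columns (the matrix of a directed acyclic graph with superdiagonal −1, subdiagonal 1, and extra −α entries two off the diagonal with each α ∈ {0,1}). Then det(Ã) = 1; in particular à has full rank, and hence the interaction matrix of a skip-vertex graph with 2n vertices has rank exactly 2n − 2. -/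
def skProp (N : ℕ) (α : ℕ → ℝ) (B : Matrix (Fin N) (Fin N) ℝ) : Prop :=
  ∀ i j : Fin N, B i j =
      if (j : ℕ) = (i : ℕ) + 1 then -1
      else if (i : ℕ) = (j : ℕ) + 1 then 1
      else if (i : ℕ) % 2 = 0 ∧ (j : ℕ) = (i : ℕ) + 2 then -(α (i : ℕ))
      else if (j : ℕ) % 2 = 0 ∧ (i : ℕ) = (j : ℕ) + 2 then α (j : ℕ)
      else 0

lemma skStep (N : ℕ) (hN : N % 2 = 0) (α : ℕ → ℝ) (B : Matrix (Fin (N+2)) (Fin (N+2)) ℝ)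
    (hB : skProp (N+2) α B) :
    ∃ B' : Matrix (Fin N) (Fin N) ℝ, skProp N α B' ∧ B.det = B'.det := by
  have hlast : ((Fin.last (N+1) : Fin (N+2)) : ℕ) = N + 1 := rfl
  set j0 : Fin (N+2) := ⟨N, by omega⟩ with hj0
  have hj0v : (j0 : ℕ) = N := rfl
  -- expand along last row
  have e1 : B.det = -(B.submatrix Fin.castSucc j0.succAbove).det := by
    rw [Matrix.det_succ_row B (Fin.last (N+1))]
    rw [Finset.sum_eq_single j0]
    · have hb : B (Fin.last (N+1)) j0 = 1 := by
        rw [hB]; simp only [hlast, hj0v]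
        rw [if_neg (by omega), if_pos trivial]
      rw [hb]
      have hs : ((Fin.last (N+1)) : ℕ) + (j0 : ℕ) = 2*N+1 := by rw [hlast, hj0v]; ring
      rw [hs]
      have : ((Fin.last (N+1)).succAbove : Fin (N+1) → Fin (N+2)) = Fin.castSucc := by
        funext x; exact Fin.succAbove_last ▸ rfl
      rw [this]
      have : (-1 : ℝ) ^ (2*N+1) = -1 := Odd.neg_one_pow ⟨N, by ring⟩
      rw [this]; ring
    · intro j _ hj
      have hjv : (j : ℕ) ≠ N := fun h => hj (Fin.ext h)
      have hjlt : (j : ℕ) < N + 2 := j.isLt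
      have hb : B (Fin.last (N+1)) j = 0 := by
        rw [hB]; simp only [hlast]
        rw [if_neg (by omega), if_neg (by omega), if_neg (by omega), if_neg (by omega)]
      rw [hb]; ring
    · intro h; exact absurd (Finset.mem_univ j0) h
  -- expand the minor along its last column
  set M : Matrix (Fin (N+1)) (Fin (N+1)) ℝ := B.submatrix Fin.castSucc j0.succAbove with hM
  have hcol : ((j0.succAbove (Fin.last N)) : ℕ) = N + 1 := by
    rw [Fin.succAbove]
    rw [if_neg (by simp [Fin.lt_def, hj0v])]
    simp
  have e2 : M.det = -(M.submatrix Fin.castSucc (Fin.last N).succAbove).det := by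
    rw [Matrix.det_succ_column M (Fin.last N)]
    rw [Finset.sum_eq_single (Fin.last N)]
    · have hb : M (Fin.last N) (Fin.last N) = -1 := by
        show B (Fin.castSucc (Fin.last N)) (j0.succAbove (Fin.last N)) = -1
        rw [hB]
        have h1 : ((Fin.castSucc (Fin.last N)) : ℕ) = N := by simp
        rw [h1, hcol, if_pos rfl]
      rw [hb]
      have : ((Fin.last N : Fin (N+1)) : ℕ) + ((Fin.last N : Fin (N+1)) : ℕ) = 2*N := by
        simp; ring
      rw [this]
      have : (-1 : ℝ) ^ (2*N) = 1 := by
        rw [pow_mul]; norm_num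
      rw [this]
      have hsA : ((Fin.last N).succAbove : Fin N → Fin (N+1)) = Fin.castSucc := by
        funext x; exact Fin.succAbove_last ▸ rfl
      rw [hsA]; ring
    · intro a _ ha
      have hav : (a : ℕ) ≠ N := fun h => ha (Fin.ext h)
      have halt : (a : ℕ) < N + 1 := a.isLt
      have hb : M a (Fin.last N) = 0 := by
        show B (Fin.castSucc a) (j0.succAbove (Fin.last N)) = 0
        rw [hB]
        have h1 : ((Fin.castSucc a) : ℕ) = (a : ℕ) := by simp
        rw [h1, hcol]
        rw [if_neg (by omega), if_neg (by omega), if_neg (by omega), if_neg (by omega)]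
      rw [hb]; ring
    · intro h; exact absurd (Finset.mem_univ _) h
  refine ⟨M.submatrix Fin.castSucc (Fin.last N).succAbove, ?_, by rw [e1, e2]; ring⟩
  -- the double minor satisfies the property
  intro b c
  have hb1 : ((Fin.castSucc (Fin.castSucc b) : Fin (N+2)) : ℕ) = (b : ℕ) := by simp
  have hc1 : ((j0.succAbove ((Fin.last N).succAbove c)) : ℕ) = (c : ℕ) := by
    have h1 : (Fin.last N).succAbove c = Fin.castSucc c := Fin.succAbove_last ▸ rfl
    rw [h1, Fin.succAbove]
    rw [if_pos (by simp [Fin.lt_def, hj0v])]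
    simp
  show B (Fin.castSucc (Fin.castSucc b)) (j0.succAbove ((Fin.last N).succAbove c)) = _
  rw [hB]
  simp only [hb1, hc1]

lemma skDet : ∀ N : ℕ, N % 2 = 0 → ∀ (α : ℕ → ℝ) (B : Matrix (Fin N) (Fin N) ℝ),
    skProp N α B → B.det = 1 := by
  intro N
  induction N using Nat.strong_induction_on with
  | _ N ih =>
    intro hN α B hB
    match N, hN, B, hB with
    | 0, _, B, hB => exact Matrix.det_fin_zero
    | 1, hN, _, _ => omega
    | (N+2), hN, B, hB =>
      obtain ⟨B', hp, hd⟩ := skStep N (by omega) α B hB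
      rw [hd]
      exact ih N (by omega) (by omega) α B' hp


lemma sum_if_pred (m : ℕ) (P : ℕ → Prop) [DecidablePred P] (c : ℕ) (hc : c < m)
    (hP : ∀ j, j < m → (P j ↔ j = c)) (x : ℝ) (v : Fin m → ℝ) :
    (∑ j : Fin m, (if P (j : ℕ) then x else 0) * v j) = x * v ⟨c, hc⟩ := by
  rw [Finset.sum_eq_single (⟨c, hc⟩ : Fin m)]
  · rw [if_pos ((hP c hc).2 rfl)]
  · intro j _ hj
    rw [if_neg, zero_mul]
    intro hPj
    exact hj (Fin.ext ((hP j j.isLt).1 hPj))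
  · intro h; exact absurd (Finset.mem_univ _) h

lemma sum_if_false (m : ℕ) (P : ℕ → Prop) [DecidablePred P]
    (hP : ∀ j, j < m → ¬ P j) (x : ℝ) (v : Fin m → ℝ) :
    (∑ j : Fin m, (if P (j : ℕ) then x else 0) * v j) = 0 :=
  Finset.sum_eq_zero fun j _ => by rw [if_neg (hP j j.isLt), zero_mul]


lemma skA_mulVec (n k : ℕ) (hn : 2 ≤ n) (hk : 2 * k < 2 * n) (v : Fin (2*n) → ℝ)
    (i : Fin (2*n)) :
    (skA (2*n) k).mulVec v i =
      -(v ⟨((i:ℕ)+1) % (2*n), Nat.mod_lt _ (by omega)⟩)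
      + v ⟨((i:ℕ)+(2*n-1)) % (2*n), Nat.mod_lt _ (by omega)⟩
      + (if (i:ℕ) % 2 = 0 ∧ (i:ℕ) < 2*k
          then -(v ⟨((i:ℕ)+2) % (2*n), Nat.mod_lt _ (by omega)⟩) else 0)
      + (if (i:ℕ) % 2 = 0 ∧ 2 ≤ (i:ℕ) ∧ (i:ℕ) < 2*k+2
          then v ⟨(i:ℕ)-2, by omega⟩ else 0) := by
  have him : (i : ℕ) < 2*n := i.isLt
  rw [Matrix.mulVec, dotProduct]
  simp only [skA, Matrix.of_apply, add_mul]
  rw [Finset.sum_add_distrib, Finset.sum_add_distrib, Finset.sum_add_distrib]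
  congr 1
  congr 1
  congr 1
  · -- piece 1
    rw [sum_if_pred (2*n) _ (((i:ℕ)+1) % (2*n)) (Nat.mod_lt _ (by omega))
        (fun j hj => Iff.rfl) (-1) v]
    ring
  · -- piece 2
    rw [sum_if_pred (2*n) (fun j => (i:ℕ) = (j+1) % (2*n)) (((i:ℕ)+(2*n-1)) % (2*n)) (Nat.mod_lt _ (by omega))
        ?_ 1 v]
    · ring
    · intro j hj
      show (i:ℕ) = (j+1) % (2*n) ↔ _
      rcases Nat.lt_or_ge j (2*n-1) with h | h
      · rw [Nat.mod_eq_of_lt (show j+1 < 2*n by omega)]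
        rcases Nat.eq_zero_or_pos (i:ℕ) with h0 | h0
        · rw [h0]
          rw [show (0:ℕ) + (2*n-1) = 2*n-1 by omega, Nat.mod_eq_of_lt (by omega)]
          omega
        · rw [show (i:ℕ) + (2*n-1) = ((i:ℕ)-1) + 2*n by omega, Nat.add_mod_right,
            Nat.mod_eq_of_lt (by omega)]
          omega
      · have hj' : j = 2*n-1 := by omega
        rw [hj', show 2*n-1+1 = 2*n by omega, Nat.mod_self]
        rcases Nat.eq_zero_or_pos (i:ℕ) with h0 | h0
        · rw [h0, show (0:ℕ) + (2*n-1) = 2*n-1 by omega, Nat.mod_eq_of_lt (by omega)]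
          omega
        · rw [show (i:ℕ) + (2*n-1) = ((i:ℕ)-1) + 2*n by omega, Nat.add_mod_right,
            Nat.mod_eq_of_lt (by omega)]
          omega
  · -- piece 3
    by_cases hQ : (i:ℕ) % 2 = 0 ∧ (i:ℕ) < 2*k
    · rw [if_pos hQ]
      rw [sum_if_pred (2*n) (fun j => (i:ℕ) % 2 = 0 ∧ (i:ℕ) < 2*k ∧ j = (i:ℕ) + 2) (((i:ℕ)+2) % (2*n)) (Nat.mod_lt _ (by omega)) ?_ (-1) v]
      · ring
      · intro j hj
        show (i:ℕ) % 2 = 0 ∧ (i:ℕ) < 2*k ∧ j = (i:ℕ) + 2 ↔ _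
        rw [Nat.mod_eq_of_lt (show (i:ℕ)+2 < 2*n by omega)]
        constructor
        · rintro ⟨-, -, h⟩; exact h
        · intro h; exact ⟨hQ.1, hQ.2, h⟩
    · rw [if_neg hQ]
      rw [sum_if_false (2*n) (fun j => (i:ℕ) % 2 = 0 ∧ (i:ℕ) < 2*k ∧ j = (i:ℕ) + 2) ?_ (-1) v]
      intro j hj
      rintro ⟨h1, h2, -⟩
      exact hQ ⟨h1, h2⟩
  · -- piece 4
    by_cases hQ : (i:ℕ) % 2 = 0 ∧ 2 ≤ (i:ℕ) ∧ (i:ℕ) < 2*k+2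
    · rw [if_pos hQ]
      rw [sum_if_pred (2*n) (fun j => j % 2 = 0 ∧ j < 2*k ∧ (i:ℕ) = j + 2) ((i:ℕ)-2) (by omega) ?_ 1 v]
      · ring
      · intro j hj
        show j % 2 = 0 ∧ j < 2*k ∧ (i:ℕ) = j + 2 ↔ _
        constructor
        · rintro ⟨-, -, h⟩; omega
        · intro h; refine ⟨by omega, by omega, by omega⟩
    · rw [if_neg hQ]
      rw [sum_if_false (2*n) (fun j => j % 2 = 0 ∧ j < 2*k ∧ (i:ℕ) = j + 2) ?_ 1 v]
      intro j hj
      rintro ⟨h1, h2, h3⟩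
      exact hQ ⟨by omega, by omega, by omega⟩

def w1 (n : ℕ) : Fin (2*n) → ℝ := fun j => if (j : ℕ) % 2 = 1 then 1 else 0

def w2 (n k : ℕ) : Fin (2*n) → ℝ := fun j =>
  if (j : ℕ) % 2 = 0 then 1 else if (j : ℕ) < 2*k then -1 else 0

set_option maxHeartbeats 2000000 in
lemma ker_vec (n k : ℕ) (hn : 2 ≤ n) (hk : 2 * k < 2 * n) (w : Fin (2*n) → ℝ)
    (hw : w = w1 n ∨ w = w2 n k) : (skA (2*n) k).mulVec w = 0 := by
  funext i
  rw [skA_mulVec n k hn hk, Pi.zero_apply]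
  obtain ⟨iv, hiv⟩ := i
  rcases hw with hw | hw <;> subst hw <;> simp only [w1, w2, Fin.val_mk] <;>
  · rcases Nat.eq_zero_or_pos iv with e0 | e0
    · subst e0
      simp only [show (0+1) % (2*n) = 1 by rw [Nat.mod_eq_of_lt (by omega)],
          show (0+(2*n-1)) % (2*n) = 2*n-1 by rw [Nat.mod_eq_of_lt (by omega)]; omega,
          show (0+2) % (2*n) = 2 by rw [Nat.mod_eq_of_lt (by omega)]]
      split_ifs <;> (try norm_num) <;> first | omega | exact ‹False›.elim | exact absurd trivial ‹¬True› | simp_all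
    · by_cases etop : iv = 2*n-1
      · subst etop
        simp only [show (2*n-1+1) % (2*n) = 0 by
              rw [show 2*n-1+1 = 2*n by omega, Nat.mod_self],
            show (2*n-1+(2*n-1)) % (2*n) = 2*n-2 by
              rw [show 2*n-1+(2*n-1) = (2*n-2)+(2*n) by omega, Nat.add_mod_right,
                Nat.mod_eq_of_lt (by omega)],
            show (2*n-1+2) % (2*n) = 1 by
              rw [show 2*n-1+2 = 1+(2*n) by omega, Nat.add_mod_right,
                Nat.mod_eq_of_lt (by omega)]]
        split_ifs <;> (try norm_num) <;> first | omega | exact ‹False›.elim | exact absurd trivial ‹¬True› | simp_all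
      · by_cases etop2 : iv = 2*n-2
        · subst etop2
          simp only [show (2*n-2+1) % (2*n) = 2*n-1 by rw [Nat.mod_eq_of_lt (by omega)]; omega,
              show (2*n-2+(2*n-1)) % (2*n) = 2*n-3 by
                rw [show 2*n-2+(2*n-1) = (2*n-3)+(2*n) by omega, Nat.add_mod_right,
                  Nat.mod_eq_of_lt (by omega)],
              show (2*n-2+2) % (2*n) = 0 by
                rw [show 2*n-2+2 = 2*n by omega, Nat.mod_self]]
          split_ifs <;> (try norm_num) <;> first | omega | exact ‹False›.elim | exact absurd trivial ‹¬True› | simp_all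
        · simp only [show (iv+1) % (2*n) = iv+1 by rw [Nat.mod_eq_of_lt (by omega)],
              show (iv+(2*n-1)) % (2*n) = iv-1 by
                rw [show iv+(2*n-1) = (iv-1)+(2*n) by omega, Nat.add_mod_right,
                  Nat.mod_eq_of_lt (by omega)],
              show (iv+2) % (2*n) = iv+2 by rw [Nat.mod_eq_of_lt (by omega)]]
          split_ifs <;> (try norm_num) <;> first | omega | exact ‹False›.elim | exact absurd trivial ‹¬True› | simp_all

set_option maxHeartbeats 2000000 in
lemma skA_sub (n k : ℕ) (hn : 2 ≤ n) :
    skProp (2*n-2) (fun i => if i < 2*k then 1 else 0)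
      ((skA (2*n) k).submatrix (Fin.castLE (by omega)) (Fin.castLE (by omega))) := by
  intro i j
  have hi : (i:ℕ) < 2*n-2 := i.isLt
  have hj : (j:ℕ) < 2*n-2 := j.isLt
  simp only [Matrix.submatrix_apply, skA, Matrix.of_apply, Fin.coe_castLE]
  simp only [Nat.mod_eq_of_lt (show (i:ℕ)+1 < 2*n by omega),
      Nat.mod_eq_of_lt (show (j:ℕ)+1 < 2*n by omega)]
  split_ifs <;> (try norm_num) <;>
    first | omega | exact ‹False›.elim | exact absurd trivial ‹¬True› | simp_all

lemma rank_lower (n k : ℕ) (hn : 2 ≤ n) (hk : 2*k < 2*n) : 2*n-2 ≤ (skA (2*n) k).rank := by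
  have hprop := skA_sub n k hn
  set f : Fin (2*n-2) → Fin (2*n) := Fin.castLE (by omega) with hf
  set S := (skA (2*n) k).submatrix f f with hS
  have hdet : S.det = 1 := skDet (2*n-2) (by omega) _ S hprop
  have hrankS : S.rank = 2*n-2 := by
    rw [Matrix.rank_of_isUnit S ((Matrix.isUnit_iff_isUnit_det S).2
      (by rw [hdet]; exact isUnit_one))]
    simp
  have h1 : ((1 : Matrix (Fin (2*n)) (Fin (2*n)) ℝ).submatrix f (Equiv.refl (Fin (2*n)))) *
      (skA (2*n) k) = (skA (2*n) k).submatrix f _root_.id := by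
    rw [Matrix.one_submatrix_mul]
    rfl
  have h2 : ((skA (2*n) k).submatrix f _root_.id) *
      ((1 : Matrix (Fin (2*n)) (Fin (2*n)) ℝ).submatrix (Equiv.refl (Fin (2*n))) f) = S := by
    rw [Matrix.mul_submatrix_one]
    rfl
  calc 2*n-2 = S.rank := hrankS.symm
    _ ≤ ((skA (2*n) k).submatrix f _root_.id).rank := by
        rw [← h2]; exact Matrix.rank_mul_le_left _ _
    _ ≤ (skA (2*n) k).rank := by
        rw [← h1]; exact Matrix.rank_mul_le_right _ _

lemma rank_upper (n k : ℕ) (hn : 2 ≤ n) (hk : 2*k < 2*n) : (skA (2*n) k).rank ≤ 2*n-2 := by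
  have hker1 : w1 n ∈ LinearMap.ker (skA (2*n) k).mulVecLin := by
    rw [LinearMap.mem_ker, Matrix.mulVecLin_apply]; exact ker_vec n k hn hk _ (Or.inl rfl)
  have hker2 : w2 n k ∈ LinearMap.ker (skA (2*n) k).mulVecLin := by
    rw [LinearMap.mem_ker, Matrix.mulVecLin_apply]; exact ker_vec n k hn hk _ (Or.inr rfl)
  have hli : LinearIndependent ℝ ![w1 n, w2 n k] := by
    rw [LinearIndependent.pair_iff]
    intro s t hst
    have h0 := congrFun hst (⟨0, by omega⟩ : Fin (2*n))
    have h1 := congrFun hst (⟨1, by omega⟩ : Fin (2*n))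
    simp only [w1, w2, Pi.add_apply, Pi.smul_apply, smul_eq_mul, Pi.zero_apply,
      Fin.val_mk] at h0 h1
    norm_num at h0 h1
    constructor
    · by_cases h : 1 < 2*k <;> simp [h] at h1 <;> linarith
    · exact h0
  have hspan : Submodule.span ℝ (Set.range ![w1 n, w2 n k]) ≤
      LinearMap.ker (skA (2*n) k).mulVecLin := by
    rw [Submodule.span_le]
    rintro x ⟨i, rfl⟩
    fin_cases i
    · exact hker1
    · exact hker2
  have h2le : 2 ≤ Module.finrank ℝ (LinearMap.ker (skA (2*n) k).mulVecLin) := by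
    calc 2 = Module.finrank ℝ (Submodule.span ℝ (Set.range ![w1 n, w2 n k])) := by
            rw [finrank_span_eq_card hli]; simp
      _ ≤ _ := Submodule.finrank_mono hspan
  have hrn := LinearMap.finrank_range_add_finrank_ker (skA (2*n) k).mulVecLin
  rw [Module.finrank_fintype_fun_eq_card, Fintype.card_fin] at hrn
  have : (skA (2*n) k).rank = Module.finrank ℝ (LinearMap.range (skA (2*n) k).mulVecLin) := rfl
  omega

theorem stmt_12 (n : ℕ) (hn : 2 ≤ n) (α : ℕ → ℝ) (hα : ∀ i, α i = 0 ∨ α i = 1)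
    (B : Matrix (Fin (2 * n - 2)) (Fin (2 * n - 2)) ℝ)
    (hB : ∀ i j, B i j =
      if (j : ℕ) = (i : ℕ) + 1 then -1
      else if (i : ℕ) = (j : ℕ) + 1 then 1
      else if (i : ℕ) % 2 = 0 ∧ (j : ℕ) = (i : ℕ) + 2 then -(α (i : ℕ))
      else if (j : ℕ) % 2 = 0 ∧ (i : ℕ) = (j : ℕ) + 2 then α (j : ℕ)
      else 0) :
    B.det = 1 ∧ ∀ k, 2 * k < 2 * n → (skA (2 * n) k).rank = 2 * n - 2 := by
  constructor
  · exact skDet (2*n-2) (by omega) α B hB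
  · intro k hk
    exact le_antisymm (rank_upper n k hn hk) (rank_lower n k hn hk)
end

section
/- Let A_in ∈ ℝ^{p×p}, Ã_out ∈ ℝ^{q×q} be skew-symmetric, r ∈ ℝ^q, R ∈ ℝ^{q×p} the matrix with all columns equal to r, and A = [[A_in, R^T],[−R, Ã_out]]. Suppose α ∈ ℝ^p satisfies A_in α = 0 with Σ_i α_i = s, and χ = (χ_1, χ̄) ∈ ℝ^{1+q} satisfies [[0, r^T],[−r, Ã_out]] χ = 0 with χ_1 = 1. Then the vector γ = (α, s·χ̄) ∈ ℝ^{p+q} lies in the kernel of A. -/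
open Matrix

theorem stmt_15 (p q : ℕ)
    (Ain : Matrix (Fin p) (Fin p) ℝ) (hin : Ainᵀ = -Ain)
    (Atil : Matrix (Fin q) (Fin q) ℝ) (hout : Atilᵀ = -Atil)
    (r : Fin q → ℝ)
    (R : Matrix (Fin q) (Fin p) ℝ) (hR : ∀ i j, R i j = r i)
    (α : Fin p → ℝ) (hker : Ain.mulVec α = 0) (s : ℝ) (hs : ∑ i, α i = s)
    (χbar : Fin q → ℝ)
    (hχ : (Matrix.fromBlocks (0 : Matrix Unit Unit ℝ) (Matrix.of fun (_ : Unit) (j : Fin q) => r j)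
            (Matrix.of fun (i : Fin q) (_ : Unit) => -(r i)) Atil).mulVec
          (Sum.elim (fun _ : Unit => (1 : ℝ)) χbar) = 0) :
    (Matrix.fromBlocks Ain Rᵀ (-R) Atil).mulVec
      (Sum.elim α (fun j => s * χbar j)) = 0 := by
  have h1 : ∑ j, r j * χbar j = 0 := by
    have := congrFun hχ (Sum.inl ())
    simpa [Matrix.mulVec, dotProduct, Matrix.fromBlocks] using this
  have h2 : ∀ i, ∑ j, Atil i j * χbar j = r i := by
    intro i
    have := congrFun hχ (Sum.inr i)
    simp [Matrix.mulVec, dotProduct, Matrix.fromBlocks] at this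
    linarith
  funext x
  cases x with
  | inl i =>
    have h0 := congrFun hker i
    simp [Matrix.mulVec, dotProduct, Matrix.fromBlocks, hR,
      Matrix.transpose_apply, mul_comm, ← Finset.mul_sum] at h0 ⊢
    have e : ∑ x : Fin q, r x * (s * χbar x) = s * ∑ j : Fin q, r j * χbar j := by
      rw [Finset.mul_sum]; exact Finset.sum_congr rfl fun j _ => by ring
    rw [h0, e, h1]; ring
  | inr i =>
    have e2 : ∑ x : Fin q, Atil i x * (s * χbar x) = s * r i := by
      rw [show (fun x => Atil i x * (s * χbar x)) = fun x => s * (Atil i x * χbar x) from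
        funext fun x => by ring, ← Finset.mul_sum, h2 i]
    simp [Matrix.mulVec, dotProduct, Matrix.fromBlocks, hR, e2]
    rw [← Finset.mul_sum, hs]
    ring
end

section
/- Let A ∈ ℝ^{n×n} be skew-symmetric with two identical rows i and j (and hence, by skew-symmetry, identical columns i and j). Let à ∈ ℝ^{(n−1)×(n−1)} be obtained from A by deleting row j and column j. Then rank(A) = rank(Ã), and the vector e_i − e_j lies in the kernel of A, so x_i / x_j is a conserved quantity of the replicator dynamics ẋ_k = x_k (e_k^T A x) on the positive orthant. -/
/-!
If rows `i` and `j` of a skew-symmetric matrix agree, so do columns `i` and `j`. Then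
`e_i - e_j` is in the kernel, and `A` is recovered from the matrix with row and column `j`
deleted by re-indexing `j ↦ i`; since passing to a submatrix never increases the rank, both
ranks agree. Along the replicator flow `x_i` and `x_j` have the same logarithmic derivative
`(A x)_i = (A x)_j`, so `x_i / x_j` is constant.
-/

open Matrix

namespace Matrix

variable {m n m₀ n₀ R : Type*}

theorem col_eq_of_row_eq_of_transpose_eq_neg [InvolutiveNeg R] {A : Matrix m m R}
    (hA : Aᵀ = -A) {i j : m} (hrow : ∀ k, A i k = A j k) (k : m) : A k i = A k j := by
  have hskew : ∀ a b, A b a = -A a b := fun a b => congrFun (congrFun hA a) b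
  rw [hskew i, hskew j, hrow]

theorem rank_submatrix_eq_of_submatrix_submatrix_eq [Fintype n] [Fintype n₀] [CommSemiring R]
    [StrongRankCondition R] {A : Matrix m n R} (r : m₀ → m) (c : n₀ → n) (r' : m → m₀)
    (c' : n → n₀) (h : (A.submatrix r c).submatrix r' c' = A) :
    (A.submatrix r c).rank = A.rank :=
  le_antisymm (rank_submatrix_le A r c)
    ((congrArg rank h).symm.trans_le (rank_submatrix_le _ r' c'))

section Clones

variable [DecidableEq m] {i j : m}

def mergeClone (hij : i ≠ j) (k : m) : {k : m // k ≠ j} :=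
  if h : k = j then ⟨i, hij⟩ else ⟨k, h⟩

theorem apply_mergeClone {α : Type*} {f : m → α} (hij : i ≠ j) (hf : f i = f j) (k : m) :
    f (mergeClone hij k) = f k := by
  unfold mergeClone
  split_ifs with hk
  · rw [hk, hf]
  · rfl

variable [Fintype m] {A : Matrix m m R}

theorem rank_submatrix_ne_eq_of_clone [CommSemiring R] [StrongRankCondition R] (hij : i ≠ j)
    (hrow : ∀ k, A i k = A j k) (hcol : ∀ k, A k i = A k j) :
    (A.submatrix (fun k : {k // k ≠ j} => (k : m)) (fun k : {k // k ≠ j} => (k : m))).rank =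
      A.rank := by
  refine rank_submatrix_eq_of_submatrix_submatrix_eq _ _ (mergeClone hij) (mergeClone hij) ?_
  ext k l
  simp only [submatrix_apply]
  rw [apply_mergeClone hij (f := A) (funext hrow), apply_mergeClone hij (hcol k)]

theorem mulVec_single_sub_single_of_col_eq [NonAssocRing R] (hcol : ∀ k, A k i = A k j) :
    A *ᵥ (Pi.single i 1 - Pi.single j 1) = 0 := by
  funext k
  simp [mulVec_sub, mulVec_single, hcol k]

end Clones

end Matrix

theorem deriv_div_eq_zero_of_deriv_eq_mul {f g : ℝ → ℝ} {t c : ℝ}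
    (hf : DifferentiableAt ℝ f t) (hg : DifferentiableAt ℝ g t) (hg0 : g t ≠ 0)
    (hf' : deriv f t = f t * c) (hg' : deriv g t = g t * c) : deriv (fun s => f s / g s) t = 0 := by
  rw [deriv_fun_div hf hg hg0, hf', hg']
  ring

theorem stmt_17 {n : ℕ} (A : Matrix (Fin n) (Fin n) ℝ) (hA : Aᵀ = -A)
    (i j : Fin n) (hij : i ≠ j) (hrows : ∀ k, A i k = A j k)
    (x : ℝ → Fin n → ℝ)
    (hx : ∀ l, Differentiable ℝ fun t => x t l)
    (hpos : ∀ t l, 0 < x t l)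
    (hode : ∀ t l, deriv (fun s => x s l) t = x t l * ∑ m, A l m * x t m) :
    A.rank = (A.submatrix (fun k : {k : Fin n // k ≠ j} => (k : Fin n))
                (fun k : {k : Fin n // k ≠ j} => (k : Fin n))).rank ∧
    A.mulVec (Pi.single i 1 - Pi.single j 1) = 0 ∧
    ∀ t, deriv (fun s => x s i / x s j) t = 0 := by
  have hcols := col_eq_of_row_eq_of_transpose_eq_neg hA hrows
  refine ⟨(rank_submatrix_ne_eq_of_clone hij hrows hcols).symm,
    mulVec_single_sub_single_of_col_eq hcols, fun t => ?_⟩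
  refine deriv_div_eq_zero_of_deriv_eq_mul (hx i t) (hx j t) (hpos t j).ne' (hode t i) ?_
  rw [hode t j, funext hrows]
end
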